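/- Key identity in the proof of Theorem A: let μ be the Gibbs measure of f on a finite product space, and 𝒫 any partition of ∏ᵢKᵢ. Then DTC(μ) + Σ_{P∈𝒫} μ(P) ∫ D(μ|_P ‖ ξ_{∇f(y,·)}) μ|_P(dy) = H_μ(𝒫) + Σ_P μ(P) ∫∫ (∇f(y,y) - ∇f(x,y)) μ|_P(dy) μ|_P(dx). -/

import Mathlib

open Real Finset

/-- A probability mass function on a finite type. -/
def IsPMF {α : Type*} [Fintype α] (μ : α → ℝ) : Prop :=
  (∀ x, 0 ≤ μ x) ∧ ∑ x, μ x = 1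

/-- Kullback–Leibler divergence. -/
noncomputable def KL {α : Type*} [Fintype α] (μ γ : α → ℝ) : ℝ :=
  ∑ x, μ x * Real.log (μ x / γ x)

/-- The Gibbs measure of the potential `f` relative to the reference measure `l`. -/
noncomputable def gibbs {α : Type*} [Fintype α] (f : α → ℝ) (l : α → ℝ) : α → ℝ :=
  fun x => Real.exp (f x) * l x / ∑ y, Real.exp (f y) * l y

/-- Product of the measures `l i` on the product space. -/
noncomputable def prodMeas {n : ℕ} {K : Fin n → Type*} [∀ i, Fintype (K i)]
    (l : ∀ i, K i → ℝ) : (∀ i, K i) → ℝ :=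
  fun x => ∏ i, l i (x i)

/-- Discrete partial derivative `∂ᵢf(x,y)` with reference points `star`. -/
noncomputable def dpart {n : ℕ} {K : Fin n → Type*} (f : (∀ i, K i) → ℝ)
    (star : ∀ i, K i) (i : Fin n) (x : ∀ j, K j) (y : K i) : ℝ :=
  f (Function.update x i y) - f (Function.update x i (star i))

/-- Discrete gradient `∇f(x,y) = Σᵢ ∂ᵢf(x,yᵢ)` with reference points `star`. -/
noncomputable def dgrad {n : ℕ} {K : Fin n → Type*} (f : (∀ i, K i) → ℝ)
    (star : ∀ i, K i) (x y : ∀ i, K i) : ℝ :=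
  ∑ i, dpart f star i x (y i)

/-- The product Gibbs measure `ξ_{∇f(x,·)} = ∏ᵢ ξ_{∂ᵢf(x,·)}` of the additively
separable potential `∇f(x,·)`. -/
noncomputable def xiGrad {n : ℕ} {K : Fin n → Type*} [∀ i, Fintype (K i)]
    (f : (∀ i, K i) → ℝ) (star : ∀ i, K i) (l : ∀ i, K i → ℝ) (x : ∀ i, K i) :
    (∀ i, K i) → ℝ :=
  fun y => ∏ i, gibbs (dpart f star i x) (l i) (y i)

/-- Shannon entropy of a probability mass function. -/
noncomputable def ent {α : Type*} [Fintype α] (μ : α → ℝ) : ℝ :=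
  -∑ x, μ x * Real.log (μ x)

/-- Glue a value `y` in coordinate `i` to a configuration `z` of the remaining coordinates. -/
def glue {n : ℕ} {K : Fin n → Type*} (i : Fin n)
    (z : (j : {j : Fin n // j ≠ i}) → K j.1) (y : K i) : ∀ j, K j :=
  fun j => if h : j = i then cast (congrArg K h.symm) y else z ⟨j, h⟩

/-- Marginal of a measure on `∏ j, K j` on the coordinates other than `i`. -/
noncomputable def margRest {n : ℕ} {K : Fin n → Type*} [∀ i, Fintype (K i)]
    (μ : (∀ j, K j) → ℝ) (i : Fin n) : ((j : {j : Fin n // j ≠ i}) → K j.1) → ℝ :=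
  fun z => ∑ y : K i, μ (glue i z y)

/-- Dual total correlation: `DTC(μ) = H(μ) - Σᵢ H_μ(xᵢ | x_{[n]∖i})`, where the
conditional entropy is `H(μ) - H(margRest μ i)`. -/
noncomputable def DTC {n : ℕ} {K : Fin n → Type*} [∀ i, Fintype (K i)]
    (μ : (∀ j, K j) → ℝ) : ℝ :=
  ent μ - ∑ i, (ent μ - ent (margRest μ i))

/-- Mass of the cell labelled `j` of the partition given by the labelling `c`. -/
noncomputable def cellMass {α : Type*} [Fintype α] {I : Type*} [Fintype I] [DecidableEq I]
    (μ : α → ℝ) (c : α → I) (j : I) : ℝ :=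
  ∑ x, if c x = j then μ x else 0

/-- The measure `μ` conditioned on the cell labelled `j`. -/
noncomputable def condMeas {α : Type*} [Fintype α] {I : Type*} [Fintype I] [DecidableEq I]
    (μ : α → ℝ) (c : α → I) (j : I) : α → ℝ :=
  fun x => if c x = j then μ x / cellMass μ c j else 0

/-- Shannon entropy of the partition given by the labelling `c`, under `μ`. -/
noncomputable def partEnt {α : Type*} [Fintype α] {I : Type*} [Fintype I] [DecidableEq I]
    (μ : α → ℝ) (c : α → I) : ℝ :=
  -∑ j, cellMass μ c j * Real.log (cellMass μ c j)

/-!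
Under the Gibbs measure `μ`, the law of `xᵢ` given the other coordinates is the Gibbs measure of
`∂ᵢf(x,·)`, so `ξ_{∇f(x,·)}(x) = ∏ᵢ μ(xᵢ | x_{[n]∖i})` and the chain rule for entropy gives
`DTC(μ) = H(μ) + E_μ log ξ_{∇f(x,·)}(x)`. Since `log ξ_{∇f(y,·)}(x) = ∇f(y,x) + a(x) - b(y)`,
for every probability `ν` the average `E_{ν(dy)} D(ν ‖ ξ_{∇f(y,·)})` equals
`-H(ν) - E_ν log ξ_{∇f(y,·)}(y) + ∬ (∇f(y,y) - ∇f(x,y)) ν(dy) ν(dx)`.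
Applying this to each `μ|_P` and averaging over the cells, the chain rule
`H(μ) = H_μ(𝒫) + Σ_P μ(P) H(μ|_P)` gives the identity.
-/

lemma mul_log_div_eq_of_le {a b : ℝ} (ha : 0 ≤ a) (hab : a ≤ b) :
    a * Real.log (a / b) = a * Real.log a - a * Real.log b := by
  rcases ha.eq_or_lt with rfl | ha
  · simp
  · rw [Real.log_div ha.ne' (ha.trans_le hab).ne', mul_sub]

lemma KL_eq_neg_ent_sub {α : Type*} [Fintype α] (ν : α → ℝ) {γ : α → ℝ}
    (hγ : ∀ x, γ x ≠ 0) : KL ν γ = -ent ν - ∑ x, ν x * Real.log (γ x) := by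
  rw [KL, ent, neg_neg, ← Finset.sum_sub_distrib]
  refine Finset.sum_congr rfl fun x _ => ?_
  by_cases hx : ν x = 0
  · simp [hx]
  · rw [Real.log_div hx (hγ x), mul_sub]

section Partition

variable {α : Type*} [Fintype α] {I : Type*} [Fintype I] [DecidableEq I]
  {μ : α → ℝ} (c : α → I)

lemma sum_sum_ite_eq_sum (h : α → ℝ) :
    ∑ j, ∑ x, (if c x = j then h x else 0) = ∑ x, h x := by
  rw [Finset.sum_comm]
  simp

lemma sum_mul_comp_eq_sum_cellMass_mul (g : I → ℝ) :
    ∑ x, μ x * g (c x) = ∑ j, cellMass μ c j * g j := by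
  simp only [cellMass, Finset.sum_mul, ite_mul, zero_mul]
  rw [Finset.sum_comm]
  simp

lemma le_cellMass (hμ : ∀ x, 0 ≤ μ x) {x : α} : μ x ≤ cellMass μ c (c x) := by
  simpa [cellMass] using Finset.single_le_sum (f := fun y => if c y = c x then μ y else 0)
    (fun y _ => by split_ifs <;> simp [hμ]) (Finset.mem_univ x)

lemma sum_condMeas {j : I} (hj : cellMass μ c j ≠ 0) : ∑ x, condMeas μ c j x = 1 := by
  have hdiv : ∀ x, condMeas μ c j x = (if c x = j then μ x else 0) / cellMass μ c j := fun x => by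
    unfold condMeas; split_ifs <;> simp
  rw [Finset.sum_congr rfl fun x _ => hdiv x, ← Finset.sum_div]
  exact div_self hj

lemma cellMass_mul_condMeas (hμ : ∀ x, 0 ≤ μ x) (j : I) (x : α) :
    cellMass μ c j * condMeas μ c j x = if c x = j then μ x else 0 := by
  unfold condMeas
  split_ifs with hx
  · subst hx
    rcases (hμ x).eq_or_lt with h | h
    · simp [← h]
    · field_simp [((h.trans_le (le_cellMass c hμ)).ne')]
  · simp

lemma sum_cellMass_mul_sum_condMeas (hμ : ∀ x, 0 ≤ μ x) (g : α → ℝ) :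
    ∑ j, cellMass μ c j * ∑ x, condMeas μ c j x * g x = ∑ x, μ x * g x := by
  simp_rw [Finset.mul_sum, ← mul_assoc, cellMass_mul_condMeas c hμ, ite_mul, zero_mul]
  exact sum_sum_ite_eq_sum c _

lemma ent_eq_partEnt_add (hμ : ∀ x, 0 ≤ μ x) :
    ent μ = partEnt μ c + ∑ j, cellMass μ c j * ent (condMeas μ c j) := by
  have hcell : ∀ j, cellMass μ c j * ent (condMeas μ c j)
      = -∑ x, if c x = j then μ x * Real.log (μ x) - μ x * Real.log (cellMass μ c (c x))
          else 0 := by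
    intro j
    rw [ent, mul_neg, Finset.mul_sum]
    congr 1
    refine Finset.sum_congr rfl fun x _ => ?_
    rw [← mul_assoc, cellMass_mul_condMeas c hμ]
    simp only [condMeas]
    split_ifs with hx
    · subst hx; exact mul_log_div_eq_of_le (hμ x) (le_cellMass c hμ)
    · simp
  rw [Finset.sum_congr rfl fun j _ => hcell j, Finset.sum_neg_distrib, sum_sum_ite_eq_sum c,
    Finset.sum_sub_distrib, sum_mul_comp_eq_sum_cellMass_mul c fun j => Real.log (cellMass μ c j),
    partEnt, ent]
  ring

end Partition

section Product

variable {n : ℕ} {K : Fin n → Type*}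

lemma piSplitAt_symm_apply_eq_glue (i : Fin n) (u : K i) (z : (j : {j : Fin n // j ≠ i}) → K j.1) :
    (Equiv.piSplitAt i K).symm (u, z) = glue i z u := by
  funext j
  by_cases h : j = i
  · subst h; simp [glue, Equiv.piSplitAt]
  · simp [glue, Equiv.piSplitAt, h]

lemma glue_restrict_eq_update (i : Fin n) (x : ∀ j, K j) (u : K i) :
    glue i (fun j => x j.1) u = Function.update x i u := by
  funext j
  by_cases h : j = i
  · subst h; simp [glue]
  · simp [glue, h]

lemma restrict_glue (i : Fin n) (z : (j : {j : Fin n // j ≠ i}) → K j.1) (u : K i) :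
    (fun j : {j : Fin n // j ≠ i} => glue i z u j.1) = z := by
  funext j
  simp [glue, j.2]

variable [∀ i, Fintype (K i)]

lemma sum_eq_sum_sum_glue (i : Fin n) (F : (∀ j, K j) → ℝ) :
    ∑ x, F x = ∑ z, ∑ u, F (glue i z u) := by
  rw [← (Equiv.piSplitAt i K).symm.sum_comp, Fintype.sum_prod_type_right]
  simp only [piSplitAt_symm_apply_eq_glue]

lemma margRest_restrict (μ : (∀ j, K j) → ℝ) (i : Fin n) (x : ∀ j, K j) :
    margRest μ i (fun j => x j.1) = ∑ u, μ (Function.update x i u) := by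
  simp only [margRest, glue_restrict_eq_update]

/-- The conditional probability `μ(xᵢ | x_{[n]∖i})`. -/
noncomputable def condRest (μ : (∀ j, K j) → ℝ) (i : Fin n) (x : ∀ j, K j) : ℝ :=
  μ x / margRest μ i (fun j => x j.1)

variable {μ : (∀ j, K j) → ℝ}

lemma le_margRest_restrict (hμ : ∀ x, 0 ≤ μ x) (i : Fin n) (x : ∀ j, K j) :
    μ x ≤ margRest μ i (fun j => x j.1) := by
  rw [margRest_restrict]
  simpa using Finset.single_le_sum (fun u _ => hμ (Function.update x i u)) (Finset.mem_univ (x i))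

lemma ent_sub_ent_margRest (hμ : ∀ x, 0 ≤ μ x) (i : Fin n) :
    ent μ - ent (margRest μ i) = -∑ x, μ x * Real.log (condRest μ i x) := by
  have hmarg : ∑ z, margRest μ i z * Real.log (margRest μ i z)
      = ∑ x, μ x * Real.log (margRest μ i (fun j => x j.1)) := by
    rw [sum_eq_sum_sum_glue i fun x => μ x * Real.log (margRest μ i (fun j => x j.1))]
    simp only [restrict_glue, margRest, Finset.sum_mul]
  simp only [ent, condRest, hmarg, Finset.sum_sub_distrib,
    fun x => mul_log_div_eq_of_le (hμ x) (le_margRest_restrict hμ i x)]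
  ring

lemma DTC_eq_ent_add_sum_log_condRest (hμ : ∀ x, 0 ≤ μ x) :
    DTC μ = ent μ + ∑ x, μ x * ∑ i, Real.log (condRest μ i x) := by
  simp only [DTC, ent_sub_ent_margRest hμ, Finset.mul_sum, Finset.sum_neg_distrib]
  rw [Finset.sum_comm]
  ring

end Product

lemma sum_mul_KL_eq {β : Type*} [Fintype β] {ν : β → ℝ} (hν : ∑ x, ν x = 1)
    {ξ : β → β → ℝ} (hξ : ∀ y x, ξ y x ≠ 0) {g : β → β → ℝ} {a b : β → ℝ}
    (hlog : ∀ y x, Real.log (ξ y x) = g y x + a x - b y) :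
    ∑ y, ν y * KL ν (ξ y)
      = -ent ν - ∑ y, ν y * Real.log (ξ y y) + ∑ x, ∑ y, ν x * ν y * (g y y - g x y) := by
  have hmean : ∀ r, ∑ y, ν y * r = r := fun r => by rw [← Finset.sum_mul, hν, one_mul]
  have hinner : ∀ y, ∑ x, ν x * Real.log (ξ y x) = ∑ x, ν x * g y x + ∑ x, ν x * a x - b y := by
    intro y
    simp only [hlog, mul_add, mul_sub, Finset.sum_add_distrib, Finset.sum_sub_distrib, hmean]
  have hdiag : ∑ x, ∑ y, ν x * ν y * g y y = ∑ y, ν y * g y y := by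
    rw [Finset.sum_comm]
    simp only [mul_assoc, ← Finset.sum_mul, hν, one_mul]
  have hcross : ∑ y, ν y * ∑ x, ν x * g y x = ∑ x, ∑ y, ν x * ν y * g x y := by
    simp only [Finset.mul_sum, mul_assoc]
  simp only [KL_eq_neg_ent_sub _ (hξ _), hinner]
  simp only [hlog, mul_add, mul_sub, Finset.sum_add_distrib, Finset.sum_sub_distrib, hmean, hcross,
    hdiag]
  ring

section Gibbs

lemma gibbs_pos {β : Type*} [Fintype β] (g : β → ℝ) {l : β → ℝ} (hl : ∀ v, 0 < l v) (v : β) :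
    0 < gibbs g l v :=
  div_pos (mul_pos (Real.exp_pos _) (hl v))
    (Finset.sum_pos (fun u _ => mul_pos (Real.exp_pos _) (hl u)) ⟨v, Finset.mem_univ v⟩)

lemma log_gibbs {β : Type*} [Fintype β] (g : β → ℝ) {l : β → ℝ} (hl : ∀ v, 0 < l v) (v : β) :
    Real.log (gibbs g l v) = g v + Real.log (l v) - Real.log (∑ u, Real.exp (g u) * l u) := by
  have hZ : 0 < ∑ u, Real.exp (g u) * l u :=
    Finset.sum_pos (fun u _ => mul_pos (Real.exp_pos _) (hl u)) ⟨v, Finset.mem_univ v⟩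
  rw [gibbs, Real.log_div (mul_pos (Real.exp_pos _) (hl v)).ne' hZ.ne',
    Real.log_mul (Real.exp_pos _).ne' (hl v).ne', Real.log_exp]

lemma gibbs_eq_div_sum {β : Type*} [Fintype β] {g l p : β → ℝ} {C : ℝ} (hC : C ≠ 0)
    (hp : ∀ v, p v = C * (Real.exp (g v) * l v)) (v : β) :
    gibbs g l v = p v / ∑ u, p u := by
  simp only [gibbs, hp, ← Finset.mul_sum, mul_div_mul_left _ _ hC]

variable {n : ℕ} {K : Fin n → Type*} [∀ i, Fintype (K i)] {l : ∀ i, K i → ℝ}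

lemma prodMeas_update (i : Fin n) (x : ∀ j, K j) (v : K i) :
    prodMeas l (Function.update x i v) = l i v * ∏ j ∈ Finset.univ \ {i}, l j (x j) := by
  simp only [prodMeas, Function.apply_update (fun j => l j),
    Finset.prod_update_of_mem (Finset.mem_univ i)]

variable (hl : ∀ i x, 0 < l i x) (f : (∀ i, K i) → ℝ) (star : ∀ i, K i)
include hl

lemma prodMeas_pos (x : ∀ i, K i) : 0 < prodMeas l x :=
  Finset.prod_pos fun i _ => hl i (x i)

lemma gibbs_dpart_eq_condRest (i : Fin n) (x : ∀ j, K j) :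
    gibbs (dpart f star i x) (l i) (x i) = condRest (gibbs f (prodMeas l)) i x := by
  have hZ : 0 < ∑ y, Real.exp (f y) * prodMeas l y :=
    Finset.sum_pos (fun y _ => mul_pos (Real.exp_pos _) (prodMeas_pos hl y)) ⟨x, Finset.mem_univ x⟩
  have hC : 0 < Real.exp (f (Function.update x i (star i))) * (∏ j ∈ Finset.univ \ {i}, l j (x j))
      / ∑ y, Real.exp (f y) * prodMeas l y :=
    div_pos (mul_pos (Real.exp_pos _) (Finset.prod_pos fun j _ => hl j (x j))) hZ
  rw [condRest, margRest_restrict]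
  refine (gibbs_eq_div_sum (p := fun v => gibbs f (prodMeas l) (Function.update x i v)) hC.ne'
    (fun v => ?_) (x i)).trans ?_
  · simp only [gibbs, prodMeas_update, dpart, Real.exp_sub]
    field_simp
  · simp only [Function.update_eq_self]

lemma log_xiGrad (y x : ∀ i, K i) :
    Real.log (xiGrad f star l y x) = dgrad f star y x + ∑ i, Real.log (l i (x i))
      - ∑ i, Real.log (∑ u, Real.exp (dpart f star i y u) * l i u) := by
  rw [xiGrad, Real.log_prod fun i _ => (gibbs_pos _ (hl i) _).ne']
  simp only [log_gibbs _ (hl _), dgrad, Finset.sum_add_distrib, Finset.sum_sub_distrib]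

lemma xiGrad_pos (y x : ∀ i, K i) : 0 < xiGrad f star l y x :=
  Finset.prod_pos fun i _ => gibbs_pos _ (hl i) _

lemma DTC_gibbs :
    DTC (gibbs f (prodMeas l))
      = ent (gibbs f (prodMeas l))
        + ∑ x, gibbs f (prodMeas l) x * Real.log (xiGrad f star l x x) := by
  rw [DTC_eq_ent_add_sum_log_condRest fun x => (gibbs_pos f (prodMeas_pos hl) x).le]
  congr 1
  refine Finset.sum_congr rfl fun x _ => ?_
  rw [xiGrad, Real.log_prod fun i _ => (gibbs_pos _ (hl i) _).ne']
  simp only [gibbs_dpart_eq_condRest hl]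

end Gibbs

theorem key_identity_general {n : ℕ} (K : Fin n → Type*)
    [∀ i, Fintype (K i)]
    (l : ∀ i, K i → ℝ) (hlpos : ∀ i x, 0 < l i x)
    (star : ∀ i, K i) (f : (∀ i, K i) → ℝ)
    {I : Type*} [Fintype I] [DecidableEq I] (c : (∀ i, K i) → I)
    (μ : (∀ i, K i) → ℝ) (hμ : μ = gibbs f (prodMeas l)) :
    DTC μ + ∑ j, cellMass μ c j *
        ∑ y, condMeas μ c j y * KL (condMeas μ c j) (xiGrad f star l y)
      = partEnt μ c + ∑ j, cellMass μ c j *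
          ∑ x, ∑ y, condMeas μ c j x * condMeas μ c j y *
            (dgrad f star y y - dgrad f star x y) := by
  have hμnn : ∀ x, 0 ≤ μ x := fun x => hμ ▸ (gibbs_pos f (prodMeas_pos hlpos) x).le
  have hcell : ∀ j, cellMass μ c j * ∑ y, condMeas μ c j y * KL (condMeas μ c j) (xiGrad f star l y)
      = cellMass μ c j * (-ent (condMeas μ c j)
          - ∑ y, condMeas μ c j y * Real.log (xiGrad f star l y y)
          + ∑ x, ∑ y, condMeas μ c j x * condMeas μ c j y *
              (dgrad f star y y - dgrad f star x y)) := by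
    intro j
    rcases eq_or_ne (cellMass μ c j) 0 with h | h
    · simp [h]
    · rw [sum_mul_KL_eq (sum_condMeas c h) (fun y x => (xiGrad_pos hlpos f star y x).ne')
        (log_xiGrad hlpos f star)]
  rw [Finset.sum_congr rfl fun j _ => hcell j, hμ, DTC_gibbs hlpos f star, ← hμ,
    ent_eq_partEnt_add c hμnn]
  simp only [mul_add, mul_sub, mul_neg, Finset.sum_add_distrib, Finset.sum_sub_distrib,
    Finset.sum_neg_distrib, sum_cellMass_mul_sum_condMeas c hμnn]
  ring

/-- The key identity in the proof of Theorem A. -/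
theorem key_identity {n : ℕ} (K : Fin n → Type*)
    [∀ i, Fintype (K i)] [∀ i, Nonempty (K i)]
    (l : ∀ i, K i → ℝ) (hl : ∀ i, IsPMF (l i)) (hlpos : ∀ i x, 0 < l i x)
    (star : ∀ i, K i) (f : (∀ i, K i) → ℝ)
    {I : Type*} [Fintype I] [DecidableEq I] (c : (∀ i, K i) → I)
    (μ : (∀ i, K i) → ℝ) (hμ : μ = gibbs f (prodMeas l)) :
    DTC μ + ∑ j, cellMass μ c j *
        ∑ y, condMeas μ c j y * KL (condMeas μ c j) (xiGrad f star l y)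
      = partEnt μ c + ∑ j, cellMass μ c j *
          ∑ x, ∑ y, condMeas μ c j x * condMeas μ c j y *
            (dgrad f star y y - dgrad f star x y) :=
  key_identity_general K l hlpos star f c μ hμ
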